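/- arXiv:2110.09357 — 5 statements merged into one kernel-verified Lean document; each statement's English description precedes it below -/
import Mathlib

section
/- Let A be a unit sign row matrix of size m × n and let S be an n × n diagonal matrix with strictly positive diagonal entries. Then S⁻¹·Aᵀ is the Moore–Penrose pseudoinverse of A·S, i.e., setting B = A·S and M = S⁻¹·Aᵀ, the four Penrose equations hold: B·M·B = B, M·B·M = M, (B·M)ᵀ = B·M, and (M·B)ᵀ = M·B. -/
open Matrix

/-- A unit sign row matrix: each row has exactly one nonzero entry, equal to `±1`,
located in a distinct column. -/
def IsUnitSignRow {m n : ℕ} (A : Matrix (Fin m) (Fin n) ℝ) : Prop :=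
  ∃ (σ : Fin m → Fin n) (ε : Fin m → ℝ),
    Function.Injective σ ∧ (∀ i, ε i = 1 ∨ ε i = -1) ∧
    ∀ i j, A i j = if j = σ i then ε i else 0

/-- If `A` is a unit sign row matrix and `S` is a diagonal matrix with strictly
positive diagonal entries, then `S⁻¹ · Aᵀ` is the Moore–Penrose pseudoinverse of
`A · S`: with `B = A·S` and `M = S⁻¹·Aᵀ`, the four Penrose equations hold. -/
theorem unitSignRow_scaled_pseudoinverse {m n : ℕ} (A : Matrix (Fin m) (Fin n) ℝ)
    (hA : IsUnitSignRow A)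
    (S : Matrix (Fin n) (Fin n) ℝ) (d : Fin n → ℝ)
    (hd : ∀ i, 0 < d i) (hS : S = Matrix.diagonal d) :
    (A * S) * (S⁻¹ * Aᵀ) * (A * S) = A * S ∧
    (S⁻¹ * Aᵀ) * (A * S) * (S⁻¹ * Aᵀ) = S⁻¹ * Aᵀ ∧
    ((A * S) * (S⁻¹ * Aᵀ))ᵀ = (A * S) * (S⁻¹ * Aᵀ) ∧
    ((S⁻¹ * Aᵀ) * (A * S))ᵀ = (S⁻¹ * Aᵀ) * (A * S) := by
  obtain ⟨σ, ε, hσ, hε, hAval⟩ := hA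
  have hdet : IsUnit S.det := by
    rw [hS, Matrix.det_diagonal]
    exact isUnit_iff_ne_zero.mpr (Finset.prod_pos (fun i _ => hd i)).ne'
  have hSS : S * S⁻¹ = 1 := Matrix.mul_nonsing_inv _ hdet
  have hSinv : S⁻¹ = Matrix.diagonal (fun j => (d j)⁻¹) := by
    rw [hS, Matrix.inv_diagonal]
    have h2 : Ring.inverse d = fun j => (d j)⁻¹ :=
      Ring.inverse_unit ⟨d, fun j => (d j)⁻¹, funext fun j => mul_inv_cancel₀ (hd j).ne',
        funext fun j => inv_mul_cancel₀ (hd j).ne'⟩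
    rw [h2]
  have hε2 : ∀ i, ε i * ε i = 1 := by
    intro i
    rcases hε i with h | h <;> rw [h] <;> norm_num
  have hAA : A * Aᵀ = 1 := by
    ext i k
    simp only [Matrix.mul_apply, Matrix.transpose_apply, hAval, Matrix.one_apply,
      ite_mul, zero_mul, mul_ite, mul_zero]
    rw [Finset.sum_ite_eq' Finset.univ (σ k)]
    simp only [Finset.mem_univ, if_true]
    by_cases h : i = k
    · subst h; simp [hε2]
    · rw [if_neg (fun hc => h (hσ hc.symm)), if_neg h]
  have hBM : (A * S) * (S⁻¹ * Aᵀ) = 1 := by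
    rw [← Matrix.mul_assoc, Matrix.mul_assoc A S, hSS, Matrix.mul_one, hAA]
  have hAtA : Aᵀ * A = Matrix.diagonal (fun j => if ∃ i, σ i = j then (1:ℝ) else 0) := by
    ext j k
    simp only [Matrix.mul_apply, Matrix.transpose_apply, hAval, Matrix.diagonal_apply]
    by_cases h : j = k
    · subst h
      simp only [if_true]
      by_cases he : ∃ i, σ i = j
      · obtain ⟨i0, hi0⟩ := he
        rw [if_pos ⟨i0, hi0⟩]
        rw [Finset.sum_eq_single i0]
        · simp [hi0.symm, hε2]
        · intro b _ hb
          have : j ≠ σ b := fun hc => hb (hσ ((hi0.trans hc).symm))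
          simp [this]
        · simp
      · rw [if_neg he]
        apply Finset.sum_eq_zero
        intro i _
        have : j ≠ σ i := fun hc => he ⟨i, hc.symm⟩
        simp [this]
    · rw [if_neg h]
      apply Finset.sum_eq_zero
      intro i _
      by_cases hj : j = σ i
      · have : k ≠ σ i := fun hc => h (hj.trans hc.symm)
        simp [this]
      · simp [hj]
  have hMB : (S⁻¹ * Aᵀ) * (A * S) =
      Matrix.diagonal (fun j => ((d j)⁻¹ * (if ∃ i, σ i = j then (1:ℝ) else 0)) * d j) := by
    rw [← Matrix.mul_assoc, Matrix.mul_assoc S⁻¹ Aᵀ A, hAtA, hSinv, hS,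
      Matrix.diagonal_mul_diagonal, Matrix.diagonal_mul_diagonal]
  refine ⟨?_, ?_, ?_, ?_⟩
  · rw [hBM, Matrix.one_mul]
  · rw [Matrix.mul_assoc, hBM, Matrix.mul_one]
  · rw [hBM, Matrix.transpose_one]
  · rw [hMB, Matrix.diagonal_transpose]
end

section
/- (Lemma 2) Let A be a unit sign row matrix of size m × n, let S be an n × n diagonal matrix with strictly positive diagonal entries, and let M be any n × m matrix satisfying the four Penrose equations for B = A·S (so that M = (A·S)⁺ is the Moore–Penrose pseudoinverse). Then S·(I − M·(A·S))·S⁻¹ = I − Aᵀ·A. -/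
open Matrix

/-- (Lemma 2) If `A` is a unit sign row matrix, `S` is diagonal with strictly
positive diagonal entries, and `M` satisfies the four Penrose equations for
`B = A·S` (so `M = (A·S)⁺`), then `S·(I − M·(A·S))·S⁻¹ = I − Aᵀ·A`. -/
theorem lemma2_projection_identity {m n : ℕ} (A : Matrix (Fin m) (Fin n) ℝ)
    (hA : IsUnitSignRow A)
    (S : Matrix (Fin n) (Fin n) ℝ) (d : Fin n → ℝ)
    (hd : ∀ i, 0 < d i) (hS : S = Matrix.diagonal d)
    (M : Matrix (Fin n) (Fin m) ℝ)
    (h1 : (A * S) * M * (A * S) = A * S)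
    (h2 : M * (A * S) * M = M)
    (h3 : ((A * S) * M)ᵀ = (A * S) * M)
    (h4 : (M * (A * S))ᵀ = M * (A * S)) :
    S * ((1 : Matrix (Fin n) (Fin n) ℝ) - M * (A * S)) * S⁻¹ =
      (1 : Matrix (Fin n) (Fin n) ℝ) - Aᵀ * A := by
  obtain ⟨σ, ε, hinj, hε, hAval⟩ := hA
  have hdet : IsUnit S.det := by
    rw [hS, Matrix.det_diagonal]
    exact (Finset.prod_ne_zero_iff.2 fun i _ => (hd i).ne').isUnit
  have hSS : S * S⁻¹ = 1 := Matrix.mul_nonsing_inv S hdet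
  have hSS' : S⁻¹ * S = 1 := Matrix.nonsing_inv_mul S hdet
  -- A * Aᵀ = 1
  have hAAT : A * Aᵀ = 1 := by
    ext i k
    simp only [Matrix.mul_apply, Matrix.transpose_apply, hAval]
    by_cases h : i = k
    · subst h
      simp only [Matrix.one_apply_eq]
      rw [Finset.sum_eq_single (σ i)]
      · rcases hε i with h1 | h1 <;> simp [h1]
      · intro b _ hb; simp [hb]
      · simp
    · rw [Matrix.one_apply_ne h, Finset.sum_eq_zero]
      intro j _
      by_cases hj : j = σ i
      · have hk : j ≠ σ k := fun hk => h (hinj (hj ▸ hk).symm).symm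
        have hik : σ i ≠ σ k := fun e => hk (hj.trans e)
        simp [hj, hk, hik]
      · simp [hj]
  -- Aᵀ * A is diagonal
  have hP : Aᵀ * A = Matrix.diagonal (fun j => (Aᵀ * A) j j) := by
    ext j k
    by_cases h : j = k
    · subst h; simp [Matrix.diagonal_apply_eq]
    · rw [Matrix.diagonal_apply_ne _ h]
      simp only [Matrix.mul_apply, Matrix.transpose_apply, hAval]
      apply Finset.sum_eq_zero
      intro i _
      by_cases hj : j = σ i
      · have hk : k ≠ σ i := fun hk => h (hj.trans hk.symm)
        simp [hj, hk]
      · simp [hj]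
  have hcomm : Aᵀ * A * S = S * (Aᵀ * A) := by
    rw [hP, hS, Matrix.diagonal_mul_diagonal, Matrix.diagonal_mul_diagonal]
    exact congrArg Matrix.diagonal (funext fun j => mul_comm _ _)
  have hNB : (S⁻¹ * Aᵀ) * (A * S) = Aᵀ * A := by
    have e1 : S⁻¹ * Aᵀ * (A * S) = S⁻¹ * (Aᵀ * A * S) := by
      simp only [Matrix.mul_assoc]
    rw [e1, hcomm, ← Matrix.mul_assoc, hSS', Matrix.one_mul]
  have hBN : (A * S) * (S⁻¹ * Aᵀ) = 1 := by
    have e1 : A * S * (S⁻¹ * Aᵀ) = A * (S * S⁻¹) * Aᵀ := by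
      simp only [Matrix.mul_assoc]
    rw [e1, hSS, Matrix.mul_one, hAAT]
  have hPsymm : (Aᵀ * A)ᵀ = Aᵀ * A := by
    rw [Matrix.transpose_mul, Matrix.transpose_transpose]
  have hMB : M * (A * S) = Aᵀ * A := by
    have hBNB : (A * S) * (S⁻¹ * Aᵀ) * (A * S) = A * S := by
      rw [hBN, Matrix.one_mul]
    have step1 : M * (A * S) = (M * (A * S)) * (Aᵀ * A) := by
      conv_lhs => rw [← hBNB]
      rw [← hNB]
      simp only [Matrix.mul_assoc]
    have step2 : (Aᵀ * A) * (M * (A * S)) = Aᵀ * A := by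
      rw [← hNB]
      have e1 : S⁻¹ * Aᵀ * (A * S) * (M * (A * S)) =
          S⁻¹ * Aᵀ * (A * S * M * (A * S)) := by
        simp only [Matrix.mul_assoc]
      rw [e1, h1]
    calc M * (A * S) = (M * (A * S)) * (Aᵀ * A) := step1
      _ = ((Aᵀ * A)ᵀ * (M * (A * S))ᵀ)ᵀ := by
          rw [← Matrix.transpose_mul, Matrix.transpose_transpose]
      _ = ((Aᵀ * A) * (M * (A * S)))ᵀ := by rw [hPsymm, h4]
      _ = (Aᵀ * A)ᵀ := by rw [step2]
      _ = Aᵀ * A := hPsymm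
  rw [hMB, Matrix.mul_sub, Matrix.mul_one, Matrix.sub_mul, hSS, ← hcomm,
    Matrix.mul_assoc (Aᵀ * A), hSS, Matrix.mul_one]
end

section
/- Let A be a unit sign row matrix of size m × n, let S be an n × n diagonal matrix with strictly positive diagonal entries, set K = S·S, and let M be any n × m matrix satisfying the four Penrose equations for B = A·S. Then S·(I − M·(A·S))·S = (I − Aᵀ·A)·K; that is, the dynamics dθ/dτ = −K^{1/2}(I − (h̃_θ K^{1/2})⁺(h̃_θ K^{1/2}))K^{1/2} f_θ of Eq. (36) coincide with the dynamics dθ/dτ = −(I − h̃_θᵀ h̃_θ) K f_θ of Eq. (35). -/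
/-!
Write `B = A S`. The rows of a unit sign row matrix are orthonormal, so `A Aᵀ = 1`, and `Aᵀ A` is
diagonal, hence commutes with `S`. Therefore `N = S⁻¹ Aᵀ` is a right inverse of `B` with
`N B = Aᵀ A` symmetric, and the Penrose equations `B M B = B`, `(M B)ᵀ = M B` alone force
`M B = N B = Aᵀ A`. The identity follows by moving `S` past `Aᵀ A`.
-/

open Matrix

namespace Matrix

variable {m n R : Type*} [Fintype m] [Fintype n] [DecidableEq m] [CommRing R]

theorem mul_eq_mul_of_mul_eq_one_of_isSymm {B : Matrix m n R} {M N : Matrix n m R}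
    (hBN : B * N = 1) (hNB : (N * B).IsSymm) (hBMB : B * M * B = B) (hMB : (M * B).IsSymm) :
    M * B = N * B := by
  have hMB_NB : M * B * (N * B) = M * B := by
    rw [← Matrix.mul_assoc, Matrix.mul_assoc M, hBN, Matrix.mul_one]
  calc M * B = (M * B * (N * B))ᵀ := by rw [hMB_NB, hMB.eq]
    _ = N * (B * M * B) := by rw [transpose_mul, hMB.eq, hNB.eq]; simp only [Matrix.mul_assoc]
    _ = N * B := by rw [hBMB]

variable [DecidableEq n]

theorem mul_one_sub_mul_mul_eq_of_mul_transpose_eq_one {A : Matrix m n R} {S : Matrix n n R}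
    {M : Matrix n m R} (hA : A * Aᵀ = 1) (hS : IsUnit S.det) (hcomm : Commute S (Aᵀ * A))
    (hBMB : A * S * M * (A * S) = A * S) (hMB : (M * (A * S)).IsSymm) :
    S * (1 - M * (A * S)) * S = (1 - Aᵀ * A) * (S * S) := by
  have hright : A * S * (S⁻¹ * Aᵀ) = 1 := by
    rw [Matrix.mul_assoc, ← Matrix.mul_assoc S, mul_nonsing_inv S hS, Matrix.one_mul, hA]
  have hleft : S⁻¹ * Aᵀ * (A * S) = Aᵀ * A := by
    rw [Matrix.mul_assoc, ← Matrix.mul_assoc Aᵀ, ← hcomm.eq, ← Matrix.mul_assoc,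
      nonsing_inv_mul S hS, Matrix.one_mul]
  have hsymm : (Aᵀ * A).IsSymm := by simp [IsSymm, transpose_mul]
  rw [mul_eq_mul_of_mul_eq_one_of_isSymm hright (hleft ▸ hsymm) hBMB hMB, hleft,
    Matrix.mul_sub, Matrix.mul_one, hcomm.eq, Matrix.sub_mul, Matrix.sub_mul, Matrix.one_mul,
    Matrix.mul_assoc]

end Matrix

namespace IsUnitSignRow

variable {m n : ℕ} {A : Matrix (Fin m) (Fin n) ℝ}

theorem mul_transpose_self (hA : IsUnitSignRow A) : A * Aᵀ = 1 := by
  obtain ⟨σ, ε, hσ, hε, hAe⟩ := hA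
  ext i i'
  simp only [mul_apply, transpose_apply, hAe, ite_mul, zero_mul, mul_ite, mul_zero,
    Finset.sum_ite_eq', Finset.mem_univ, if_true, hσ.eq_iff, one_apply]
  obtain rfl | hne := eq_or_ne i' i
  · rcases hε i' with h | h <;> simp [h]
  · simp [hne, hne.symm]

theorem transpose_mul_self_isDiag (hA : IsUnitSignRow A) : (Aᵀ * A).IsDiag := by
  obtain ⟨σ, ε, -, -, hAe⟩ := hA
  intro j k hjk
  rw [mul_apply]
  refine Finset.sum_eq_zero fun i _ => ?_
  simp only [transpose_apply, hAe]
  split_ifs with hj hk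
  · exact absurd (hj.trans hk.symm) hjk
  all_goals simp

theorem commute_diagonal (hA : IsUnitSignRow A) (d : Fin n → ℝ) :
    Commute (diagonal d) (Aᵀ * A) := by
  rw [← hA.transpose_mul_self_isDiag.diagonal_diag]
  exact Matrix.commute_diagonal _ _

end IsUnitSignRow

theorem eq36_coincides_eq35_general {m n : ℕ} (A : Matrix (Fin m) (Fin n) ℝ)
    (hA : IsUnitSignRow A)
    (S : Matrix (Fin n) (Fin n) ℝ) (d : Fin n → ℝ)
    (hd : ∀ i, 0 < d i) (hS : S = Matrix.diagonal d)
    (K : Matrix (Fin n) (Fin n) ℝ) (hK : K = S * S)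
    (M : Matrix (Fin n) (Fin m) ℝ)
    (h1 : (A * S) * M * (A * S) = A * S)
    (h4 : (M * (A * S))ᵀ = M * (A * S)) :
    S * ((1 : Matrix (Fin n) (Fin n) ℝ) - M * (A * S)) * S =
      ((1 : Matrix (Fin n) (Fin n) ℝ) - Aᵀ * A) * K ∧
    ∀ fθ : Fin n → ℝ,
      -((S * ((1 : Matrix (Fin n) (Fin n) ℝ) - M * (A * S)) * S) *ᵥ fθ) =
        -((((1 : Matrix (Fin n) (Fin n) ℝ) - Aᵀ * A) * K) *ᵥ fθ) := by
  have hdet : IsUnit S.det := by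
    rw [hS, det_diagonal, isUnit_iff_ne_zero]
    exact Finset.prod_ne_zero_iff.mpr fun i _ => (hd i).ne'
  have key : S * ((1 : Matrix (Fin n) (Fin n) ℝ) - M * (A * S)) * S =
      ((1 : Matrix (Fin n) (Fin n) ℝ) - Aᵀ * A) * K :=
    hK ▸ mul_one_sub_mul_mul_eq_of_mul_transpose_eq_one hA.mul_transpose_self hdet
      (hS ▸ hA.commute_diagonal d) h1 h4
  exact ⟨key, fun fθ => by rw [key]⟩

/-- If `A` is a unit sign row matrix, `S` is diagonal with strictly positive
diagonal entries, `K = S·S`, and `M` satisfies the four Penrose equations for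
`B = A·S`, then `S·(I − M·(A·S))·S = (I − Aᵀ·A)·K`; consequently the dynamics
`dθ/dτ = −K^{1/2}(I − (A K^{1/2})⁺(A K^{1/2}))K^{1/2} f_θ` of Eq. (36) coincide
with the dynamics `dθ/dτ = −(I − Aᵀ A) K f_θ` of Eq. (35). -/
theorem eq36_coincides_eq35 {m n : ℕ} (A : Matrix (Fin m) (Fin n) ℝ)
    (hA : IsUnitSignRow A)
    (S : Matrix (Fin n) (Fin n) ℝ) (d : Fin n → ℝ)
    (hd : ∀ i, 0 < d i) (hS : S = Matrix.diagonal d)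
    (K : Matrix (Fin n) (Fin n) ℝ) (hK : K = S * S)
    (M : Matrix (Fin n) (Fin m) ℝ)
    (h1 : (A * S) * M * (A * S) = A * S)
    (h2 : M * (A * S) * M = M)
    (h3 : ((A * S) * M)ᵀ = (A * S) * M)
    (h4 : (M * (A * S))ᵀ = M * (A * S)) :
    S * ((1 : Matrix (Fin n) (Fin n) ℝ) - M * (A * S)) * S =
      ((1 : Matrix (Fin n) (Fin n) ℝ) - Aᵀ * A) * K ∧
    ∀ fθ : Fin n → ℝ,
      -((S * ((1 : Matrix (Fin n) (Fin n) ℝ) - M * (A * S)) * S) *ᵥ fθ) =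
        -((((1 : Matrix (Fin n) (Fin n) ℝ) - Aᵀ * A) * K) *ᵥ fθ) :=
  eq36_coincides_eq35_general A hA S d hd hS K hK M h1 h4
end

section
/- There exist a 2 × 2 real symmetric positive-definite matrix K that is not diagonal, a vector f ∈ ℝ², and a unit sign row matrix A of size 1 × 2 such that fᵀ · (I − Aᵀ·A) · K · f < 0. Concretely, with f = (1, 2), K = [[1/5, −1], [−1, 10]], and A = [0, 1], the matrix K is symmetric positive definite and fᵀ (I − Aᵀ A) K f = −9/5 < 0, so along dθ/dτ = −(I − AᵀA) K f_θ one gets df/dτ = 9/5 > 0. -/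
open Matrix

namespace Matrix

theorem not_exists_eq_diagonal_of_ne_zero {n α : Type*} [DecidableEq n] [Zero α]
    {M : Matrix n n α} {i j : n} (hij : i ≠ j) (h : M i j ≠ 0) :
    ¬ ∃ e, M = diagonal e := by
  rintro ⟨e, rfl⟩
  exact h (diagonal_apply_ne e hij)

variable {R : Type*} [CommRing R] [LinearOrder R] [IsStrictOrderedRing R] [StarRing R]
  [TrivialStar R]

theorem posDef_fin_two_of_pos_of_det_pos {a b d : R} (ha : 0 < a) (hdet : 0 < a * d - b ^ 2) :
    (!![a, b; b, d] : Matrix (Fin 2) (Fin 2) R).PosDef := by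
  refine posDef_iff_dotProduct_mulVec.mpr ⟨?_, fun x hx => ?_⟩
  · exact isHermitian_iff_isSymm.mpr (by ext i j; fin_cases i <;> fin_cases j <;> rfl)
  have hsq : a * (star x ⬝ᵥ (!![a, b; b, d] *ᵥ x)) =
      (a * x 0 + b * x 1) ^ 2 + (a * d - b ^ 2) * x 1 ^ 2 := by
    simp only [dotProduct, Pi.star_apply, star_trivial, mulVec, of_apply, cons_val',
      cons_val_fin_one, Fin.sum_univ_two, cons_val_zero, cons_val_one]
    ring
  refine pos_of_mul_pos_right (hsq ▸ ?_) ha.le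
  by_cases h1 : x 1 = 0
  · have h0 : x 0 ≠ 0 := fun h0 => hx (by ext i; fin_cases i <;> simp [h0, h1])
    simpa [h1] using sq_pos_of_ne_zero (mul_ne_zero ha.ne' h0)
  · exact add_pos_of_nonneg_of_pos (sq_nonneg _) (mul_pos hdet (sq_pos_of_ne_zero h1))

end Matrix

theorem isUnitSignRow_of_injective {m n : ℕ} {σ : Fin m → Fin n} (hσ : Function.Injective σ) :
    IsUnitSignRow (Matrix.of fun i j => if j = σ i then (1 : ℝ) else 0) :=
  ⟨σ, 1, hσ, fun _ => Or.inl rfl, fun _ _ => rfl⟩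

/-- (Eq. 39) There exist a non-diagonal symmetric positive-definite `2 × 2` matrix `K`,
a vector `f`, and a `1 × 2` unit sign row matrix `A` with `fᵀ (I − Aᵀ A) K f < 0`;
concretely `f = (1, 2)`, `K = [[1/5, −1], [−1, 10]]`, `A = [0, 1]` give the value
`−9/5`, so `df/dτ = 9/5 > 0` along the projected dynamics. -/
theorem nondiagonal_gain_counterexample :
    ∃ (K : Matrix (Fin 2) (Fin 2) ℝ) (f : Fin 2 → ℝ) (A : Matrix (Fin 1) (Fin 2) ℝ),
      K.IsSymm ∧ K.PosDef ∧ (¬ ∃ e : Fin 2 → ℝ, K = Matrix.diagonal e) ∧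
      IsUnitSignRow A ∧
      f ⬝ᵥ (((1 : Matrix (Fin 2) (Fin 2) ℝ) - Aᵀ * A) * K) *ᵥ f < 0 ∧
      K = !![1/5, -1; -1, 10] ∧ f = ![1, 2] ∧ A = !![0, 1] ∧
      f ⬝ᵥ (((1 : Matrix (Fin 2) (Fin 2) ℝ) - Aᵀ * A) * K) *ᵥ f = -(9/5) ∧
      -(f ⬝ᵥ (((1 : Matrix (Fin 2) (Fin 2) ℝ) - Aᵀ * A) * K) *ᵥ f) = 9/5 := by
  set K : Matrix (Fin 2) (Fin 2) ℝ := !![1/5, -1; -1, 10]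
  set A : Matrix (Fin 1) (Fin 2) ℝ := !![0, 1]
  have hK : K.PosDef := posDef_fin_two_of_pos_of_det_pos (by norm_num) (by norm_num)
  have hA : A = Matrix.of fun _ j => if j = 1 then 1 else 0 := by
    ext i j; fin_cases i; fin_cases j <;> rfl
  -- `1 - Aᵀ A` projects onto the first coordinate, so the value is `f₀ (K f)₀ = 1/5 - 2`
  have hproj : (1 : Matrix (Fin 2) (Fin 2) ℝ) - Aᵀ * A = !![1, 0; 0, 0] := by
    ext i j; fin_cases i <;> fin_cases j <;> simp [A, mul_apply]
  have hvalue :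
      ![1, 2] ⬝ᵥ (((1 : Matrix (Fin 2) (Fin 2) ℝ) - Aᵀ * A) * K) *ᵥ ![1, 2] = -(9/5) := by
    rw [hproj, mul_fin_two, mulVec_fin_two]; norm_num
  refine ⟨K, ![1, 2], A, isHermitian_iff_isSymm.mp hK.isHermitian, hK,
    not_exists_eq_diagonal_of_ne_zero (i := 0) (j := 1) (by decide) (by norm_num [K]),
    hA ▸ isUnitSignRow_of_injective (σ := fun _ => 1) (Function.injective_of_subsingleton _),
    by rw [hvalue]; norm_num, rfl, rfl, rfl, hvalue, by rw [hvalue]; norm_num⟩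
end

section
/- Let A be a unit sign row matrix of size m × n and let K be an n × n diagonal matrix with strictly positive diagonal entries. Then the m × m matrix A·K·Aᵀ is invertible and, for every f ∈ ℝⁿ, −(A·K·Aᵀ)⁻¹ · (A·K·f) = −A·f. In particular, the multiplier vector π = −(h̃_θ K_θ h̃_θᵀ)⁻¹ h̃_θ K_θ f_θ of Eq. (27) equals −h̃_θ f_θ and is independent of the diagonal positive-definite gain matrix K_θ. -/
open Matrix

/-!
Row `i` of `A` lives in column `σ i` only, so right multiplication by a diagonal `K = diag d`
just rescales row `i` by `d (σ i)`: `A K = diag (d ∘ σ) A`. Distinct columns and signs `±1`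
make the rows orthonormal, `A Aᵀ = 1`. Hence `A K Aᵀ = diag (d ∘ σ)`, which is invertible,
and `(A K Aᵀ)⁻¹ (A K) = diag (d ∘ σ)⁻¹ diag (d ∘ σ) A = A`.
-/

namespace Matrix

variable {m n R : Type*} [Fintype n] [DecidableEq n] [DecidableEq m] [CommSemiring R]

theorem mul_diagonal_eq_diagonal_mul_of_single_column [Fintype m] {A : Matrix m n R}
    (σ : m → n) (hA : ∀ i j, j ≠ σ i → A i j = 0) (d : n → R) :
    A * diagonal d = diagonal (d ∘ σ) * A := by
  ext i j
  rw [mul_diagonal, diagonal_mul, Function.comp_apply]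
  by_cases hj : j = σ i
  · rw [hj, mul_comm]
  · simp only [hA i j hj, zero_mul, mul_zero]

theorem mul_transpose_eq_one_of_signed_columns {A : Matrix m n R} {σ : m → n} {ε : m → R}
    (hσ : Function.Injective σ) (hε : ∀ i, ε i * ε i = 1)
    (hA : ∀ i j, A i j = if j = σ i then ε i else 0) :
    A * Aᵀ = 1 := by
  ext i k
  simp only [mul_apply, transpose_apply, hA, mul_ite, ite_mul, mul_zero, zero_mul,
    Finset.sum_ite_eq', Finset.mem_univ, if_true, one_apply, hσ.eq_iff]
  rcases eq_or_ne i k with rfl | h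
  · simp only [if_true, hε]
  · simp only [h, h.symm, if_false]

end Matrix

/-- (Eq. 37) If `A` is a unit sign row matrix and `K` is diagonal with strictly
positive diagonal entries, then `A·K·Aᵀ` is invertible and the multiplier
`π = −(A K Aᵀ)⁻¹ A K f` equals `−A f`, independently of `K`. -/
theorem multiplier_independent_of_gain {m n : ℕ} (A : Matrix (Fin m) (Fin n) ℝ)
    (hA : IsUnitSignRow A)
    (K : Matrix (Fin n) (Fin n) ℝ) (d : Fin n → ℝ)
    (hd : ∀ i, 0 < d i) (hK : K = Matrix.diagonal d) :
    IsUnit (A * K * Aᵀ) ∧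
    ∀ f : Fin n → ℝ, -((A * K * Aᵀ)⁻¹ *ᵥ ((A * K) *ᵥ f)) = -(A *ᵥ f) := by
  obtain ⟨σ, ε, hσ, hε, hAij⟩ := hA
  have hAK : A * K = diagonal (d ∘ σ) * A :=
    hK ▸ mul_diagonal_eq_diagonal_mul_of_single_column σ (fun i j hj => by simp [hAij, hj]) d
  have hε2 : ∀ i, ε i * ε i = 1 := fun i => by rcases hε i with h | h <;> simp [h]
  have hAAt : A * Aᵀ = 1 := mul_transpose_eq_one_of_signed_columns hσ hε2 hAij
  have hGram : A * K * Aᵀ = diagonal (d ∘ σ) := by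
    rw [hAK, Matrix.mul_assoc, hAAt, Matrix.mul_one]
  have hunit : IsUnit (diagonal (d ∘ σ)) :=
    isUnit_diagonal.mpr (Pi.isUnit_iff.mpr fun i => (hd (σ i)).ne'.isUnit)
  refine ⟨hGram ▸ hunit, fun f => ?_⟩
  rw [mulVec_mulVec, hGram, hAK,
    nonsing_inv_mul_cancel_left _ _ ((isUnit_iff_isUnit_det _).mp hunit)]
end
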